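/- arXiv:2112.08678 — 2 statements merged into one kernel-verified Lean document; each statement's English description precedes it below -/
import Mathlib

section
/- Let 𝔡 = {D^0,…,D^{M−1}} be an (M,M,N2)-complete complementary code with sequences d^l_n of length N2, and let x, y be arbitrary complex sequences of length N1. Then for all 0 ≤ n1, n2 ≤ M−1 and every shift τ0 = k1·N2 + k2 with 0 ≤ k1 ≤ N1−1 and 0 ≤ k2 ≤ N2−1: Σ_{l=0}^{M−1} C_{x⊗d^l_{n1}, y⊗d^l_{n2}}(τ0) equals M·N2·C_{x,y}(k1) if k2 = 0 and n1 = n2, equals 0 if k2 ≠ 0 and n1 = n2, and equals 0 for all k2 when n1 ≠ n2. -/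
/-!
Encode a sequence `a` of length `N` by `Σ aₖ Xᵏ` and `b` by its conjugate reversal
`Σ conj(b_{N-1-k}) Xᵏ`; their product `corrPoly a b N` carries the aperiodic correlation of `a`
with `b` at shift `τ` as its coefficient of `X^(N-1-τ)`, and the conjugated correlation of `b`
with `a` at `τ` as its coefficient of `X^(N-1+τ)`. Hence a CCC is exactly a pair of polynomial
matrices `A = (seqPoly d^l_n)`, `B = (conjRevPoly d^l_n)ᵀ` with `A B = M N X^(N-1) • 1`. Over the
domain `ℂ[X]` this forces `B A = M N X^(N-1) • 1`, which is the transpose property. A Kronecker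
product becomes `corrPoly (x ⊗ a) (y ⊗ b) = corrPoly x y (X^N₂) · corrPoly a b`, so the sum over
`l` is `M N₂ X^(N₂-1) · corrPoly x y (X^N₂)` if `n₁ = n₂` and `0` otherwise; reading off the
coefficient of `X^(N₁N₂-1-(k₁N₂+k₂))` gives the claim.
-/

open Finset

/-- Aperiodic cross-correlation of length-`L` complex sequences at shift `0 ≤ τ`. -/
noncomputable def aCorr (a b : ℕ → ℂ) (L τ : ℕ) : ℂ :=
  ∑ k ∈ Finset.range (L - τ), a k * (starRingEnd ℂ) (b (k + τ))

/-- Periodic cross-correlation of length-`L` complex sequences at shift `τ`. -/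
noncomputable def pCorr (a b : ℕ → ℂ) (L τ : ℕ) : ℂ :=
  ∑ k ∈ Finset.range L, a k * (starRingEnd ℂ) (b ((k + τ) % L))

/-- Kronecker product of a sequence `x` (length `N1`) with a sequence `y` of length `N2`:
`(x ⊗ y) (k*N2 + l) = x k * y l`. -/
noncomputable def kron (x y : ℕ → ℂ) (N2 : ℕ) : ℕ → ℂ :=
  fun n => x (n / N2) * y (n % N2)

open Polynomial

theorem sum_range_mul_eq_sum_sum {β : Type*} [AddCommMonoid β] (f : ℕ → β) (m n : ℕ) :
    ∑ k ∈ range (m * n), f k = ∑ i ∈ range m, ∑ j ∈ range n, f (i * n + j) := by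
  induction m with
  | zero => simp
  | succ m ih => rw [Nat.succ_mul, sum_range_add, ih, sum_range_succ]

theorem mul_sub_one_sub_mul_add {m n i j : ℕ} (hi : i < m) (hj : j < n) :
    m * n - 1 - (i * n + j) = (m - 1 - i) * n + (n - 1 - j) := by
  obtain ⟨t, rfl⟩ : ∃ t, m = i + 1 + t := ⟨m - 1 - i, by omega⟩
  rw [show i + 1 + t - 1 - i = t by omega, add_mul, add_mul, one_mul]
  omega

theorem Matrix.mul_eq_smul_one_comm {n R : Type*} [Fintype n] [DecidableEq n] [CommRing R]
    [IsDomain R] {A B : Matrix n n R} {s : R} (hs : s ≠ 0) (h : A * B = s • 1) :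
    B * A = s • 1 := by
  have hdet : B.det ≠ 0 := by
    refine right_ne_zero_of_mul (a := A.det) ?_
    rw [← Matrix.det_mul, h, Matrix.det_smul, Matrix.det_one, mul_one]
    exact pow_ne_zero _ hs
  have hkill : (B * A - s • 1) * B = 0 := by
    rw [sub_mul, Matrix.mul_assoc, h, Matrix.smul_mul, Matrix.mul_smul, Matrix.one_mul,
      Matrix.mul_one, sub_self]
  have : B.det • (B * A - s • 1) = 0 := by
    rw [← Matrix.mul_one (B * A - s • 1), ← Matrix.mul_smul, ← Matrix.mul_adjugate,
      ← Matrix.mul_assoc, hkill, Matrix.zero_mul]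
  exact sub_eq_zero.mp ((smul_eq_zero.mp this).resolve_left hdet)

theorem coeff_ite_C_mul_X_pow {R : Type*} [Semiring R] (p : Prop) [Decidable p] (c : R)
    (k e : ℕ) :
    (if p then C c * X ^ k else 0).coeff e = if p ∧ e = k then c else 0 := by
  split_ifs <;> simp_all

theorem coeff_expand_mul_X_pow {R : Type*} [CommSemiring R] {N : ℕ} (hN : 0 < N) (p : R[X])
    (i : ℕ) {r : ℕ} (hr : r < N) :
    (expand R N p * X ^ (N - 1)).coeff (i * N + r) = if r = N - 1 then p.coeff i else 0 := by
  rw [coeff_mul_X_pow']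
  by_cases hr' : r = N - 1
  · rw [if_pos (by omega), if_pos hr', hr', Nat.add_sub_cancel, coeff_expand_mul hN]
  rw [if_neg hr']
  split_ifs with hle
  · rcases i with _ | i
    · rw [zero_mul, zero_add] at hle
      omega
    rw [coeff_expand hN, if_neg]
    have : (i + 1) * N = i * N + N := add_one_mul i N
    rw [show (i + 1) * N + r - (N - 1) = i * N + (r + 1) by omega,
      Nat.dvd_add_right (dvd_mul_left N i)]
    exact fun hdvd => absurd (Nat.le_of_dvd (by omega) hdvd) (by omega)
  · rfl

theorem aCorr_eq_zero_of_le (a b : ℕ → ℂ) {L τ : ℕ} (h : L ≤ τ) : aCorr a b L τ = 0 := by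
  simp [aCorr, Nat.sub_eq_zero_of_le h]

theorem kron_mul_add (x a : ℕ → ℂ) {N i j : ℕ} (hj : j < N) :
    kron x a N (i * N + j) = x i * a j := by
  rw [kron, add_comm, Nat.add_mul_div_right _ _ (by omega), Nat.add_mul_mod_self_right,
    Nat.div_eq_of_lt hj, Nat.mod_eq_of_lt hj, zero_add]

noncomputable def seqPoly (a : ℕ → ℂ) (N : ℕ) : ℂ[X] :=
  ∑ k ∈ range N, C (a k) * X ^ k

noncomputable def conjRevPoly (b : ℕ → ℂ) (N : ℕ) : ℂ[X] :=
  seqPoly (fun k => starRingEnd ℂ (b (N - 1 - k))) N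

noncomputable def corrPoly (a b : ℕ → ℂ) (N : ℕ) : ℂ[X] :=
  seqPoly a N * conjRevPoly b N

theorem coeff_seqPoly (a : ℕ → ℂ) (N i : ℕ) :
    (seqPoly a N).coeff i = if i < N then a i else 0 := by
  simp [seqPoly]

theorem coeff_corrPoly (a b : ℕ → ℂ) (N e : ℕ) :
    (corrPoly a b N).coeff e = ∑ i ∈ range (e + 1),
      (if i < N then a i else 0) *
        if e - i < N then starRingEnd ℂ (b (N - 1 - (e - i))) else 0 := by
  rw [corrPoly, coeff_mul, Nat.sum_antidiagonal_eq_sum_range_succ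
    (fun i j => (seqPoly a N).coeff i * (conjRevPoly b N).coeff j)]
  simp only [conjRevPoly, coeff_seqPoly]

theorem coeff_corrPoly_of_lt (a b : ℕ → ℂ) {N τ : ℕ} (hτ : τ < N) :
    (corrPoly a b N).coeff (N - 1 - τ) = aCorr a b N τ := by
  rw [coeff_corrPoly, show N - 1 - τ + 1 = N - τ by omega, aCorr]
  refine sum_congr rfl fun i hi => ?_
  rw [mem_range] at hi
  rw [if_pos (by omega), if_pos (by omega), show N - 1 - (N - 1 - τ - i) = i + τ by omega]

-- For `e ≥ 2N - 1` both sides vanish: `aCorr` at a shift `≥ N` is an empty sum.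
theorem coeff_corrPoly_of_le (a b : ℕ → ℂ) {N e : ℕ} (he : N ≤ e) :
    (corrPoly a b N).coeff e = starRingEnd ℂ (aCorr b a N (e + 1 - N)) := by
  set τ := e + 1 - N with hτ
  rw [coeff_corrPoly, aCorr, map_sum, ← sum_subset (s₁ := Ico τ N)]
  · rw [sum_Ico_eq_sum_range]
    refine sum_congr rfl fun k hk => ?_
    rw [mem_range] at hk
    rw [if_pos (by omega), if_pos (by omega), show N - 1 - (e - (τ + k)) = k by omega,
      map_mul, Complex.conj_conj, add_comm τ k, mul_comm]
  · intro i hi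
    simp only [mem_Ico, mem_range] at hi ⊢
    omega
  · intro i _ hi
    simp only [mem_Ico, not_and_or, not_le, not_lt] at hi
    rcases hi with hi | hi
    · rw [if_neg (show ¬e - i < N by omega), mul_zero]
    · rw [if_neg (show ¬i < N by omega), zero_mul]

def IsCCC (M N : ℕ) (d : ℕ → ℕ → ℕ → ℂ) : Prop :=
  ∀ l1 < M, ∀ l2 < M, ∀ τ < N,
    ∑ n ∈ range M, aCorr (d l1 n) (d l2 n) N τ = if l1 = l2 ∧ τ = 0 then (M * N : ℂ) else 0

theorem isCCC_iff_sum_corrPoly {M N : ℕ} {d : ℕ → ℕ → ℕ → ℂ} (hN : 0 < N) :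
    IsCCC M N d ↔ ∀ l1 < M, ∀ l2 < M,
      ∑ n ∈ range M, corrPoly (d l1 n) (d l2 n) N =
        if l1 = l2 then C (M * N : ℂ) * X ^ (N - 1) else 0 := by
  constructor
  · intro h l1 hl1 l2 hl2
    ext e
    rw [finsetSum_coeff, coeff_ite_C_mul_X_pow]
    rcases lt_or_ge e N with he | he
    · obtain ⟨τ, hτ, rfl⟩ : ∃ τ < N, e = N - 1 - τ := ⟨N - 1 - e, by omega, by omega⟩
      simp only [coeff_corrPoly_of_lt _ _ hτ, h l1 hl1 l2 hl2 τ hτ]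
      congr 1
      grind
    · simp only [coeff_corrPoly_of_le _ _ he, ← map_sum]
      rw [if_neg (show ¬(l1 = l2 ∧ e = N - 1) by omega)]
      rcases lt_or_ge (e + 1 - N) N with hτ | hτ
      · rw [h l2 hl2 l1 hl1 _ hτ, if_neg (show ¬(l2 = l1 ∧ e + 1 - N = 0) by omega), map_zero]
      · simp only [aCorr_eq_zero_of_le _ _ hτ, sum_const_zero, map_zero]
  · intro h l1 hl1 l2 hl2 τ hτ
    have := congrArg (coeff · (N - 1 - τ)) (h l1 hl1 l2 hl2)
    simp only [finsetSum_coeff, coeff_corrPoly_of_lt _ _ hτ, coeff_ite_C_mul_X_pow] at this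
    rw [this]
    congr 1
    grind

theorem IsCCC.transpose {M N : ℕ} {d : ℕ → ℕ → ℕ → ℂ} (h : IsCCC M N d) :
    IsCCC M N (fun n l => d l n) := by
  rcases Nat.eq_zero_or_pos N with rfl | hN
  · intro _ _ _ _ τ hτ
    omega
  rw [isCCC_iff_sum_corrPoly hN] at h ⊢
  intro n1 hn1 n2 hn2
  let A : Matrix (Fin M) (Fin M) ℂ[X] := .of fun l n => seqPoly (d l n) N
  let B : Matrix (Fin M) (Fin M) ℂ[X] := .of fun n l => conjRevPoly (d l n) N
  have hs : C (M * N : ℂ) * X ^ (N - 1) ≠ 0 :=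
    mul_ne_zero (C_ne_zero.mpr (mul_ne_zero (by exact_mod_cast (show M ≠ 0 by omega))
      (by exact_mod_cast hN.ne'))) (pow_ne_zero _ X_ne_zero)
  have hAB : A * B = (C (M * N : ℂ) * X ^ (N - 1)) • 1 := by
    ext l1 l2 : 1
    simpa [A, B, Matrix.mul_apply, Matrix.one_apply, corrPoly, sum_range, Fin.val_inj]
      using h l1 l1.2 l2 l2.2
  -- `(B * A) n₂ n₁ = Σ_l corrPoly (d l n₁) (d l n₂) N`
  have := congr_fun₂ (Matrix.mul_eq_smul_one_comm hs hAB) ⟨n2, hn2⟩ ⟨n1, hn1⟩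
  simpa [A, B, Matrix.mul_apply, Matrix.one_apply, corrPoly, sum_range, mul_comm, eq_comm]
    using this

theorem seqPoly_kron (x a : ℕ → ℂ) (N1 N : ℕ) :
    seqPoly (kron x a N) (N1 * N) = expand ℂ N (seqPoly x N1) * seqPoly a N := by
  simp only [seqPoly, sum_range_mul_eq_sum_sum, map_sum, sum_mul]
  simp only [mul_sum]
  refine sum_congr rfl fun i _ => sum_congr rfl fun j hj => ?_
  rw [kron_mul_add _ _ (mem_range.mp hj)]
  simp only [map_mul, expand_C, map_pow, expand_X]
  ring

theorem conjRevPoly_kron (y b : ℕ → ℂ) (N1 N : ℕ) :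
    conjRevPoly (kron y b N) (N1 * N) = expand ℂ N (conjRevPoly y N1) * conjRevPoly b N := by
  rw [conjRevPoly, conjRevPoly, conjRevPoly, ← seqPoly_kron]
  simp only [seqPoly, sum_range_mul_eq_sum_sum]
  refine sum_congr rfl fun i hi => sum_congr rfl fun j hj => ?_
  rw [mem_range] at hi hj
  rw [mul_sub_one_sub_mul_add hi hj, kron_mul_add _ _ (by omega), kron_mul_add _ _ hj,
    map_mul]

theorem corrPoly_kron (x y a b : ℕ → ℂ) (N1 N : ℕ) :
    corrPoly (kron x a N) (kron y b N) (N1 * N) =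
      expand ℂ N (corrPoly x y N1) * corrPoly a b N := by
  rw [corrPoly, corrPoly, corrPoly, seqPoly_kron, conjRevPoly_kron, map_mul]
  ring

theorem statement15_general (M N1 N2 : ℕ)
    (d : ℕ → ℕ → ℕ → ℂ)
    (hCCC : ∀ l1 < M, ∀ l2 < M, ∀ τ < N2,
      ∑ n ∈ Finset.range M, aCorr (d l1 n) (d l2 n) N2 τ =
        if l1 = l2 ∧ τ = 0 then (M * N2 : ℂ) else 0)
    (x y : ℕ → ℂ) :
    ∀ n1 < M, ∀ n2 < M, ∀ k1 < N1, ∀ k2 < N2,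
      ∑ l ∈ Finset.range M,
        aCorr (kron x (d l n1) N2) (kron y (d l n2) N2) (N1 * N2)
          (k1 * N2 + k2) =
        if n1 = n2 ∧ k2 = 0 then (M * N2 : ℂ) * aCorr x y N1 k1 else 0 := by
  intro n1 hn1 n2 hn2 k1 hk1 k2 hk2
  have hN2 : 0 < N2 := by omega
  have hsum : ∑ l ∈ range M, corrPoly (kron x (d l n1) N2) (kron y (d l n2) N2) (N1 * N2) =
      if n1 = n2 then C (M * N2 : ℂ) * (expand ℂ N2 (corrPoly x y N1) * X ^ (N2 - 1))
      else 0 := by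
    simp_rw [corrPoly_kron, ← mul_sum,
      (isCCC_iff_sum_corrPoly hN2).mp (IsCCC.transpose hCCC) n1 hn1 n2 hn2]
    split_ifs <;> ring
  have hτ : k1 * N2 + k2 < N1 * N2 := by nlinarith
  have := congrArg (coeff · (N1 * N2 - 1 - (k1 * N2 + k2))) hsum
  simp only [finsetSum_coeff, coeff_corrPoly_of_lt _ _ hτ] at this
  rw [this, mul_sub_one_sub_mul_add hk1 hk2]
  by_cases h : n1 = n2
  · rw [if_pos h, coeff_C_mul, coeff_expand_mul_X_pow hN2 _ _ (by omega),
      coeff_corrPoly_of_lt _ _ hk1]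
    simp only [h, true_and, show N2 - 1 - k2 = N2 - 1 ↔ k2 = 0 by omega, mul_ite, mul_zero]
  · simp [h]

theorem statement15 (M N1 N2 : ℕ) (hM : 0 < M) (hN1 : 0 < N1) (hN2 : 0 < N2)
    (d : ℕ → ℕ → ℕ → ℂ)
    (hCCC : ∀ l1 < M, ∀ l2 < M, ∀ τ < N2,
      ∑ n ∈ Finset.range M, aCorr (d l1 n) (d l2 n) N2 τ =
        if l1 = l2 ∧ τ = 0 then (M * N2 : ℂ) else 0)
    (x y : ℕ → ℂ) :
    ∀ n1 < M, ∀ n2 < M, ∀ k1 < N1, ∀ k2 < N2,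
      ∑ l ∈ Finset.range M,
        aCorr (kron x (d l n1) N2) (kron y (d l n2) N2) (N1 * N2)
          (k1 * N2 + k2) =
        if n1 = n2 ∧ k2 = 0 then (M * N2 : ℂ) * aCorr x y N1 k1 else 0 :=
  statement15_general M N1 N2 d hCCC x y
end

section
/- Let 𝔠 = {C^0,…,C^{M−1}} be an (M,M,N1)-complete complementary code with sequences c^m_n of length N1 and 𝔡 = {D^0,…,D^{M−1}} be an (M,M,N2)-complete complementary code with sequences d^l_n of length N2. For 0 ≤ m, l ≤ M−1 define the length-M·N1·N2 sequence e^m_l = (c^m_0 ⊗ d^l_0) ∥ (c^m_1 ⊗ d^l_1) ∥ … ∥ (c^m_{M−1} ⊗ d^l_{M−1}). Then for all 0 ≤ m1 ≠ m2 ≤ M−1 and every shift 0 ≤ τ ≤ M·N1·N2 − 1, Σ_{l=0}^{M−1} C_{e^{m1}_l, e^{m2}_l}(τ) = 0. -/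
open Finset

/-- The length-`M·N1·N2` sequence `e m l = (c m 0 ⊗ d l 0) ∥ (c m 1 ⊗ d l 1) ∥ ⋯`,
whose entry at position `n·N1·N2 + k·N2 + j` is `c m n k * d l n j`. -/
noncomputable def eSeq (N1 N2 : ℕ) (c d : ℕ → ℕ → ℕ → ℂ) (m l : ℕ) : ℕ → ℂ :=
  fun pos =>
    c m (pos / (N1 * N2)) ((pos % (N1 * N2)) / N2) *
      d l (pos / (N1 * N2)) ((pos % (N1 * N2)) % N2)

open Polynomial in
lemma diag_reindex {β : Type*} [AddCommMonoid β] (N : ℕ) (g : ℕ → ℕ → β) :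
    ∑ j ∈ range N, ∑ j' ∈ range N, g j j'
      = (∑ τ ∈ range N, ∑ i ∈ range (N - τ), g i (i + τ))
        + ∑ τ ∈ Finset.Ico 1 N, ∑ i ∈ range (N - τ), g (i + τ) i := by
  rw [← Finset.sum_product' (range N) (range N) g]
  rw [← Finset.sum_filter_add_sum_filter_not (range N ×ˢ range N) (fun p => p.1 ≤ p.2)]
  congr 1
  · rw [Finset.sum_sigma' (range N) (fun τ => range (N - τ)) (fun τ i => g i (i + τ))]
    refine Finset.sum_nbij' (fun p => ⟨p.2 - p.1, p.1⟩) (fun q => (q.2, q.2 + q.1)) ?_ ?_ ?_ ?_ ?_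
    · intro a ha
      simp only [mem_filter, mem_product, mem_range] at ha
      simp only [Finset.mem_sigma, mem_range]
      omega
    · intro a ha
      simp only [Finset.mem_sigma, mem_range] at ha
      simp only [mem_filter, mem_product, mem_range]
      omega
    · intro a ha
      simp only [mem_filter, mem_product, mem_range] at ha
      simp only []
      ext <;> simp <;> omega
    · intro a ha
      simp only [Finset.mem_sigma, mem_range] at ha
      simp only [Nat.add_sub_cancel_left]
    · intro a ha
      simp only [mem_filter, mem_product, mem_range] at ha
      simp only []
      congr 1
      omega
  · rw [Finset.sum_sigma' (Finset.Ico 1 N) (fun τ => range (N - τ)) (fun τ i => g (i + τ) i)]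
    refine Finset.sum_nbij' (fun p => ⟨p.1 - p.2, p.2⟩) (fun q => (q.2 + q.1, q.2)) ?_ ?_ ?_ ?_ ?_
    · intro a ha
      simp only [mem_filter, mem_product, mem_range] at ha
      simp only [Finset.mem_sigma, mem_range, Finset.mem_Ico]
      omega
    · intro a ha
      simp only [Finset.mem_sigma, mem_range, Finset.mem_Ico] at ha
      simp only [mem_filter, mem_product, mem_range]
      omega
    · intro a ha
      simp only [mem_filter, mem_product, mem_range] at ha
      ext <;> simp <;> omega
    · intro a ha
      simp only [Finset.mem_sigma, mem_range, Finset.mem_Ico] at ha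
      simp only [Nat.add_sub_cancel_left]
    · intro a ha
      simp only [mem_filter, mem_product, mem_range] at ha
      simp only []
      congr 1
      omega

open Polynomial in
lemma poly_corr_single (N : ℕ) (a b : ℕ → ℂ) :
    (∑ j ∈ range N, C (a j) * X ^ j) *
        (∑ j ∈ range N, C ((starRingEnd ℂ) (b j)) * X ^ (N - 1 - j))
      = ∑ τ ∈ range N, C (aCorr a b N τ) * X ^ (N - 1 - τ)
        + ∑ τ ∈ Finset.Ico 1 N, C ((starRingEnd ℂ) (aCorr b a N τ)) * X ^ (N - 1 + τ) := by
  rw [Finset.sum_mul_sum]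
  have : ∀ j j' : ℕ, (C (a j) * X ^ j) * (C ((starRingEnd ℂ) (b j')) * X ^ (N - 1 - j'))
      = C (a j * (starRingEnd ℂ) (b j')) * X ^ (j + (N - 1 - j')) := by
    intro j j'; rw [map_mul, pow_add]; ring
  simp only [this]
  rw [diag_reindex N (fun j j' => C (a j * (starRingEnd ℂ) (b j')) * X ^ (j + (N - 1 - j')))]
  congr 1
  · refine Finset.sum_congr rfl fun τ hτ => ?_
    rw [mem_range] at hτ
    rw [aCorr, map_sum, Finset.sum_mul]
    refine Finset.sum_congr rfl fun i hi => ?_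
    rw [mem_range] at hi
    congr 2
    omega
  · refine Finset.sum_congr rfl fun τ hτ => ?_
    rw [Finset.mem_Ico] at hτ
    rw [aCorr, map_sum (starRingEnd ℂ), map_sum C, Finset.sum_mul]
    refine Finset.sum_congr rfl fun i hi => ?_
    rw [mem_range] at hi
    have hv : (starRingEnd ℂ) (b i * (starRingEnd ℂ) (a (i + τ))) =
        a (i + τ) * (starRingEnd ℂ) (b i) := by
      simp [mul_comm]
    rw [hv]
    congr 2
    omega

lemma aCorr_zero_conj (a b : ℕ → ℂ) (N : ℕ) :
    aCorr a b N 0 = (starRingEnd ℂ) (aCorr b a N 0) := by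
  rw [aCorr, aCorr, map_sum]
  refine Finset.sum_congr rfl fun i _ => ?_
  simp [mul_comm]


open Polynomial in
lemma transposeCCC (M N : ℕ) (hM : 0 < M) (hN : 0 < N) (x : ℕ → ℕ → ℕ → ℂ)
    (hx : ∀ m1 < M, ∀ m2 < M, ∀ τ < N,
      ∑ n ∈ range M, aCorr (x m1 n) (x m2 n) N τ = if m1 = m2 ∧ τ = 0 then (M * N : ℂ) else 0) :
    ∀ n1 < M, ∀ n2 < M, ∀ τ < N,
      ∑ k ∈ range M, aCorr (x k n1) (x k n2) N τ
        = if n1 = n2 ∧ τ = 0 then (M * N : ℂ) else 0 := by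
  intro n1 hn1 n2 hn2 τ0 hτ0
  set q : ℂ[X] := C (M * N : ℂ) * X ^ (N - 1) with hqdef
  set P : ℕ → ℕ → ℂ[X] := fun k n => ∑ j ∈ range N, C (x k n j) * X ^ j with hP
  set Q : ℕ → ℕ → ℂ[X] := fun n k => ∑ j ∈ range N, C ((starRingEnd ℂ) (x k n j)) * X ^ (N - 1 - j)
    with hQ
  set A : Matrix (Fin M) (Fin M) ℂ[X] := Matrix.of (fun k n : Fin M => P k n) with hA
  set B : Matrix (Fin M) (Fin M) ℂ[X] := Matrix.of (fun n k : Fin M => Q n k) with hB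
  -- Step 1 : A * B = q • 1
  have hAB : A * B = q • (1 : Matrix (Fin M) (Fin M) ℂ[X]) := by
    ext k1 k2
    rw [Matrix.mul_apply]
    have e1 : ∑ n : Fin M, A k1 n * B n k2 = ∑ i ∈ range M, P k1 i * Q i k2 :=
      Fin.sum_univ_eq_sum_range (fun i => P k1 i * Q i k2) M
    rw [e1]
    have e2 : ∀ i ∈ range M, P k1 i * Q i k2
        = ∑ τ ∈ range N, C (aCorr (x k1 i) (x k2 i) N τ) * X ^ (N - 1 - τ)
          + ∑ τ ∈ Finset.Ico 1 N,
              C ((starRingEnd ℂ) (aCorr (x k2 i) (x k1 i) N τ)) * X ^ (N - 1 + τ) := by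
      intro i _
      exact poly_corr_single N (x k1 i) (x k2 i)
    rw [Finset.sum_congr rfl e2, Finset.sum_add_distrib, Finset.sum_comm,
      Finset.sum_comm (s := range M) (t := Finset.Ico 1 N)]
    have e3 : ∀ τ ∈ range N,
        (∑ i ∈ range M, C (aCorr (x k1 i) (x k2 i) N τ) * X ^ (N - 1 - τ))
          = C (if (k1 : ℕ) = (k2 : ℕ) ∧ τ = 0 then (M * N : ℂ) else 0) * X ^ (N - 1 - τ) := by
      intro τ hτ
      rw [← Finset.sum_mul, ← map_sum, hx k1 k1.isLt k2 k2.isLt τ (mem_range.mp hτ)]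
    have e4 : ∀ τ ∈ Finset.Ico 1 N,
        (∑ i ∈ range M,
            C ((starRingEnd ℂ) (aCorr (x k2 i) (x k1 i) N τ)) * X ^ (N - 1 + τ)) = 0 := by
      intro τ hτ
      rw [← Finset.sum_mul, ← map_sum, ← map_sum, hx k2 k2.isLt k1 k1.isLt τ (Finset.mem_Ico.mp hτ).2]
      have : ¬((k2 : ℕ) = (k1 : ℕ) ∧ τ = 0) := by
        rw [Finset.mem_Ico] at hτ; omega
      rw [if_neg this]
      simp
    rw [Finset.sum_congr rfl e3, Finset.sum_congr rfl e4, Finset.sum_const_zero, add_zero]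
    rw [Finset.sum_eq_single_of_mem 0 (mem_range.mpr hN)]
    · simp only [Nat.sub_zero, and_true]
      rw [Matrix.smul_apply, Matrix.one_apply]
      by_cases h : k1 = k2
      · rw [if_pos h, if_pos (by rw [h]), smul_eq_mul, mul_one, hqdef]
      · rw [if_neg h, if_neg (fun hv => h (Fin.ext hv)), smul_eq_mul, mul_zero, map_zero,
          zero_mul]
    · intro τ hτ hτ0'
      rw [if_neg (by omega), map_zero, zero_mul]
  -- Step 2 : B * A = q • 1 via fraction field
  have hq : q ≠ 0 := by
    apply mul_ne_zero
    · rw [Ne, Polynomial.C_eq_zero]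
      exact mul_ne_zero (Nat.cast_ne_zero.mpr hM.ne') (Nat.cast_ne_zero.mpr hN.ne')
    · exact pow_ne_zero _ Polynomial.X_ne_zero
  have hBA : B * A = q • (1 : Matrix (Fin M) (Fin M) ℂ[X]) := by
    set F := FractionRing ℂ[X]
    set φ : ℂ[X] →+* F := algebraMap ℂ[X] F with hφ
    have hinj : Function.Injective φ := IsFractionRing.injective ℂ[X] F
    have hφq : φ q ≠ 0 := fun h => hq (hinj (by rw [h, map_zero]))
    have hmapsmul : ∀ (r : ℂ[X]) (C' : Matrix (Fin M) (Fin M) ℂ[X]),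
        (r • C').map φ = φ r • C'.map φ := by
      intro r C'
      ext i j
      simp [Matrix.map_apply, Matrix.smul_apply]
    have h1 : A.map φ * B.map φ = φ q • (1 : Matrix (Fin M) (Fin M) F) := by
      rw [← Matrix.map_mul, hAB, hmapsmul, Matrix.map_one φ (map_zero φ) (map_one φ)]
    have h2 : A.map φ * ((φ q)⁻¹ • B.map φ) = 1 := by
      rw [Matrix.mul_smul, h1, smul_smul, inv_mul_cancel₀ hφq, one_smul]
    have h3 := mul_eq_one_comm.mp h2
    have h4 : B.map φ * A.map φ = φ q • (1 : Matrix (Fin M) (Fin M) F) := by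
      rw [Matrix.smul_mul] at h3
      calc B.map φ * A.map φ = φ q • ((φ q)⁻¹ • (B.map φ * A.map φ)) := by
            rw [smul_smul, mul_inv_cancel₀ hφq, one_smul]
        _ = φ q • (1 : Matrix (Fin M) (Fin M) F) := by rw [h3]
    have h5 : (B * A).map φ = (q • (1 : Matrix (Fin M) (Fin M) ℂ[X])).map φ := by
      rw [Matrix.map_mul, h4, hmapsmul, Matrix.map_one φ (map_zero φ) (map_one φ)]
    refine Matrix.ext fun i j => hinj ?_
    simpa [Matrix.map_apply] using congrArg (fun m => m i j) h5
  -- Step 3 : read off the entry (n1, n2)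
  set i1 : Fin M := ⟨n1, hn1⟩
  set i2 : Fin M := ⟨n2, hn2⟩
  have key : (∑ τ ∈ range N, C (∑ k ∈ range M, aCorr (x k n2) (x k n1) N τ) * X ^ (N - 1 - τ))
      + ∑ τ ∈ Finset.Ico 1 N,
          C ((starRingEnd ℂ) (∑ k ∈ range M, aCorr (x k n1) (x k n2) N τ)) * X ^ (N - 1 + τ)
      = if n1 = n2 then q else 0 := by
    have e1 : (B * A) i1 i2 = ∑ k ∈ range M, P k n2 * Q n1 k := by
      rw [Matrix.mul_apply]
      have : ∀ k : Fin M, B i1 k * A k i2 = P (k : ℕ) n2 * Q n1 (k : ℕ) := fun k => mul_comm _ _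
      rw [Finset.sum_congr rfl (fun k _ => this k)]
      exact Fin.sum_univ_eq_sum_range (fun k => P k n2 * Q n1 k) M
    have e2 : ∀ k ∈ range M, P k n2 * Q n1 k
        = ∑ τ ∈ range N, C (aCorr (x k n2) (x k n1) N τ) * X ^ (N - 1 - τ)
          + ∑ τ ∈ Finset.Ico 1 N,
              C ((starRingEnd ℂ) (aCorr (x k n1) (x k n2) N τ)) * X ^ (N - 1 + τ) :=
      fun k _ => poly_corr_single N (x k n2) (x k n1)
    have e3 : (B * A) i1 i2 = if n1 = n2 then q else 0 := by
      rw [hBA, Matrix.smul_apply, Matrix.one_apply]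
      by_cases h : n1 = n2
      · rw [if_pos h, if_pos (Fin.ext h), smul_eq_mul, mul_one]
      · rw [if_neg h, if_neg (fun hv => h (Fin.ext_iff.mp hv)), smul_eq_mul, mul_zero]
    rw [← e3, e1, Finset.sum_congr rfl e2, Finset.sum_add_distrib, Finset.sum_comm,
      Finset.sum_comm (s := range M) (t := Finset.Ico 1 N)]
    congr 1
    · refine Finset.sum_congr rfl fun τ _ => ?_
      rw [← Finset.sum_mul, ← map_sum]
    · refine Finset.sum_congr rfl fun τ _ => ?_
      rw [← Finset.sum_mul, ← map_sum, ← map_sum]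
  have hcoeffA : ∀ (g : ℕ → ℂ) (τ1 : ℕ), τ1 < N →
      (∑ τ ∈ range N, C (g τ) * X ^ (N - 1 - τ)).coeff (N - 1 + τ1)
        = if τ1 = 0 then g 0 else 0 := by
    intro g τ1 hτ1
    rw [Polynomial.finset_sum_coeff]
    by_cases h : τ1 = 0
    · subst h
      rw [if_pos rfl, Finset.sum_eq_single_of_mem 0 (mem_range.mpr hN)]
      · rw [Polynomial.coeff_C_mul, Polynomial.coeff_X_pow, if_pos (by omega), mul_one]
      · intro b hb hb0
        rw [Polynomial.coeff_C_mul, Polynomial.coeff_X_pow,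
          if_neg (by rw [mem_range] at hb; omega), mul_zero]
    · rw [if_neg h]
      refine Finset.sum_eq_zero fun b hb => ?_
      rw [Polynomial.coeff_C_mul, Polynomial.coeff_X_pow,
        if_neg (by rw [mem_range] at hb; omega), mul_zero]
  have hcoeffB : ∀ (g : ℕ → ℂ) (τ1 : ℕ), τ1 < N →
      (∑ τ ∈ Finset.Ico 1 N, C (g τ) * X ^ (N - 1 + τ)).coeff (N - 1 + τ1)
        = if τ1 = 0 then 0 else g τ1 := by
    intro g τ1 hτ1
    rw [Polynomial.finset_sum_coeff]
    by_cases h : τ1 = 0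
    · rw [if_pos h]
      refine Finset.sum_eq_zero fun b hb => ?_
      rw [Polynomial.coeff_C_mul, Polynomial.coeff_X_pow,
        if_neg (by rw [Finset.mem_Ico] at hb; omega), mul_zero]
    · rw [if_neg h, Finset.sum_eq_single_of_mem τ1
        (Finset.mem_Ico.mpr ⟨Nat.pos_of_ne_zero h, hτ1⟩)]
      · rw [Polynomial.coeff_C_mul, Polynomial.coeff_X_pow, if_pos rfl, mul_one]
      · intro b hb hb0
        rw [Polynomial.coeff_C_mul, Polynomial.coeff_X_pow,
          if_neg (by rw [Finset.mem_Ico] at hb; omega), mul_zero]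
  have hco := congrArg (fun p => Polynomial.coeff p (N - 1 + τ0)) key
  simp only [Polynomial.coeff_add] at hco
  rw [hcoeffA _ τ0 hτ0, hcoeffB _ τ0 hτ0] at hco
  have hR : (if n1 = n2 then q else 0 : ℂ[X]).coeff (N - 1 + τ0)
      = if n1 = n2 ∧ τ0 = 0 then (M * N : ℂ) else 0 := by
    by_cases h : n1 = n2
    · rw [if_pos h, hqdef, Polynomial.coeff_C_mul, Polynomial.coeff_X_pow]
      by_cases h0 : τ0 = 0
      · rw [if_pos (by omega), mul_one, if_pos ⟨h, h0⟩]
      · rw [if_neg (by omega), mul_zero, if_neg (fun hv => h0 hv.2)]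
    · rw [if_neg h, Polynomial.coeff_zero, if_neg (fun hv => h hv.1)]
  rw [hR] at hco
  by_cases h0 : τ0 = 0
  · subst h0
    rw [if_pos rfl, if_pos rfl, add_zero] at hco
    have hconj : ∑ k ∈ range M, aCorr (x k n1) (x k n2) N 0
        = (starRingEnd ℂ) (∑ k ∈ range M, aCorr (x k n2) (x k n1) N 0) := by
      rw [map_sum]
      exact Finset.sum_congr rfl fun k _ => aCorr_zero_conj _ _ N
    rw [hconj, hco]
    by_cases h : n1 = n2
    · rw [if_pos (show n1 = n2 ∧ 0 = 0 from ⟨h, rfl⟩)]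
      simp
    · rw [if_neg (show ¬(n1 = n2 ∧ 0 = 0) from fun hv => h hv.1)]
      exact map_zero _
  · rw [if_neg h0, if_neg h0, if_neg (fun hv => h0 hv.2), zero_add] at hco
    rw [if_neg (fun hv => h0 hv.2)]
    have := congrArg (starRingEnd ℂ) hco
    simpa using this

lemma sum_range_mul' {β : Type*} [AddCommMonoid β] (a b : ℕ) (f : ℕ → β) :
    ∑ p ∈ range (a * b), f p = ∑ i ∈ range a, ∑ j ∈ range b, f (b * i + j) := by
  induction a with
  | zero => simp
  | succ n ih =>
    rw [Nat.succ_mul, Finset.sum_range_add, ih, Finset.sum_range_succ]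
    congr 1
    refine Finset.sum_congr rfl fun j _ => ?_
    congr 1
    ring

lemma sum_range_ite' (K L : ℕ) (hKL : K ≤ L) (g : ℕ → ℂ) :
    ∑ p ∈ range L, (if p < K then g p else 0) = ∑ p ∈ range K, g p := by
  obtain ⟨r, rfl⟩ : ∃ r, L = K + r := ⟨L - K, by omega⟩
  rw [Finset.sum_range_add]
  have h1 : ∀ p ∈ range K, (if p < K then g p else 0) = g p := fun p hp =>
    if_pos (mem_range.mp hp)
  have h2 : ∀ x ∈ range r, (if K + x < K then g (K + x) else 0) = 0 := fun x _ =>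
    if_neg (by omega)
  rw [Finset.sum_congr rfl h1, Finset.sum_congr rfl h2, Finset.sum_const_zero, add_zero]

lemma sub_lt_block {N1 N2 : ℕ} {k j : ℕ} (hk : k < N1) (hj : j < N2) :
    N2 * k + j < N1 * N2 := by
  calc N2 * k + j < N2 * k + N2 := by omega
    _ = N2 * (k + 1) := by ring
    _ ≤ N2 * N1 := Nat.mul_le_mul_left N2 hk
    _ = N1 * N2 := Nat.mul_comm N2 N1

lemma block_lt {M L0 a r : ℕ} (hr : r < L0) : L0 * a + r < M * L0 ↔ a < M := by
  constructor
  · intro h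
    by_contra hc
    push_neg at hc
    have h2 : L0 * M ≤ L0 * a := Nat.mul_le_mul_left L0 hc
    have h3 : L0 * M = M * L0 := Nat.mul_comm _ _
    omega
  · intro h
    calc L0 * a + r < L0 * (a + 1) := by ring_nf; omega
      _ ≤ L0 * M := Nat.mul_le_mul_left L0 h
      _ = M * L0 := Nat.mul_comm L0 M

lemma eSeq_apply (N1 N2 : ℕ) (hN2 : 0 < N2) (c d : ℕ → ℕ → ℕ → ℂ) (m l n k j : ℕ)
    (hk : k < N1) (hj : j < N2) :
    eSeq N1 N2 c d m l ((N1 * N2) * n + (N2 * k + j)) = c m n k * d l n j := by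
  have hb : N2 * k + j < N1 * N2 := sub_lt_block hk hj
  have hN1 : 0 < N1 := by omega
  have hN12 : 0 < N1 * N2 := Nat.mul_pos hN1 hN2
  rw [eSeq]
  rw [Nat.mul_add_div hN12, Nat.div_eq_of_lt hb, add_zero,
    Nat.mul_add_mod, Nat.mod_eq_of_lt hb,
    Nat.mul_add_div hN2, Nat.div_eq_of_lt hj, add_zero,
    Nat.mul_add_mod, Nat.mod_eq_of_lt hj]

section Blocks
variable (M N2 : ℕ) (d : ℕ → ℕ → ℕ → ℂ)

lemma blockA
    (htrans : ∀ n1 < M, ∀ n2 < M, ∀ τ < N2,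
      ∑ l ∈ range M, aCorr (d l n1) (d l n2) N2 τ
        = if n1 = n2 ∧ τ = 0 then (M * N2 : ℂ) else 0)
    (n n' t : ℕ) (hn : n < M) (ht : t < N2) (z1 z2 : ℂ)
    (COND : Prop) [Decidable COND] (hcond : COND → n' < M) :
    ∑ j ∈ range (N2 - t), ∑ l ∈ range M,
        (if COND then (z1 * d l n j) * (starRingEnd ℂ) (z2 * d l n' (j + t)) else 0)
      = if COND ∧ n = n' ∧ t = 0 then (M * N2 : ℂ) * (z1 * (starRingEnd ℂ) z2) else 0 := by
  by_cases hC : COND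
  · simp only [if_pos hC]
    rw [Finset.sum_comm]
    have hl : ∀ l ∈ range M,
        ∑ j ∈ range (N2 - t), (z1 * d l n j) * (starRingEnd ℂ) (z2 * d l n' (j + t))
          = (z1 * (starRingEnd ℂ) z2) * aCorr (d l n) (d l n') N2 t := by
      intro l _
      rw [aCorr, Finset.mul_sum]
      refine Finset.sum_congr rfl fun j _ => ?_
      rw [map_mul]
      ring
    rw [Finset.sum_congr rfl hl, ← Finset.mul_sum, htrans n hn n' (hcond hC) t ht]
    by_cases h : n = n' ∧ t = 0
    · rw [if_pos h, if_pos ⟨hC, h⟩, mul_comm]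
    · rw [if_neg h, if_neg (fun hv => h hv.2), mul_zero]
  · simp [hC]

lemma blockB
    (htrans : ∀ n1 < M, ∀ n2 < M, ∀ τ < N2,
      ∑ l ∈ range M, aCorr (d l n1) (d l n2) N2 τ
        = if n1 = n2 ∧ τ = 0 then (M * N2 : ℂ) else 0)
    (n n' t : ℕ) (hn : n < M) (ht : t < N2) (z1 z2 : ℂ)
    (COND : Prop) [Decidable COND] (hcond : COND → n' < M) :
    ∑ i ∈ range t, ∑ l ∈ range M,
        (if COND then (z1 * d l n (N2 - t + i)) * (starRingEnd ℂ) (z2 * d l n' i) else 0)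
      = 0 := by
  rcases Nat.eq_zero_or_pos t with rfl | htpos
  · simp
  by_cases hC : COND
  · simp only [if_pos hC]
    rw [Finset.sum_comm]
    have hl : ∀ l ∈ range M,
        ∑ i ∈ range t, (z1 * d l n (N2 - t + i)) * (starRingEnd ℂ) (z2 * d l n' i)
          = (z1 * (starRingEnd ℂ) z2) *
              (starRingEnd ℂ) (aCorr (d l n') (d l n) N2 (N2 - t)) := by
      intro l _
      rw [aCorr]
      have hrange : N2 - (N2 - t) = t := by omega
      rw [hrange, map_sum, Finset.mul_sum]
      refine Finset.sum_congr rfl fun i _ => ?_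
      rw [map_mul, map_mul, RingHomCompTriple.comp_apply]
      simp only [RingHom.id_apply, starRingEnd_self_apply]
      rw [show N2 - t + i = i + (N2 - t) by omega]
      ring
    rw [Finset.sum_congr rfl hl, ← Finset.mul_sum, ← map_sum,
      htrans n' (hcond hC) n hn (N2 - t) (by omega)]
    rw [if_neg (by omega), map_zero, mul_zero]
  · simp [hC]

end Blocks

theorem statement18 (M N1 N2 : ℕ) (hM : 0 < M) (hN1 : 0 < N1) (hN2 : 0 < N2)
    (c d : ℕ → ℕ → ℕ → ℂ)
    (hCCCc : ∀ m1 < M, ∀ m2 < M, ∀ τ < N1,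
      ∑ n ∈ Finset.range M, aCorr (c m1 n) (c m2 n) N1 τ =
        if m1 = m2 ∧ τ = 0 then (M * N1 : ℂ) else 0)
    (hCCCd : ∀ l1 < M, ∀ l2 < M, ∀ τ < N2,
      ∑ n ∈ Finset.range M, aCorr (d l1 n) (d l2 n) N2 τ =
        if l1 = l2 ∧ τ = 0 then (M * N2 : ℂ) else 0) :
    ∀ m1 < M, ∀ m2 < M, m1 ≠ m2 → ∀ τ < M * N1 * N2,
      ∑ l ∈ Finset.range M,
        aCorr (eSeq N1 N2 c d m1 l) (eSeq N1 N2 c d m2 l) (M * N1 * N2) τ = 0 := by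
  intro m1 hm1 m2 hm2 hne τ hτ
  have hL0pos : 0 < N1 * N2 := Nat.mul_pos hN1 hN2
  have hτ' : τ < M * (N1 * N2) := by rw [← mul_assoc]; exact hτ
  obtain ⟨u, v, hu, hvlt, hτuv⟩ :
      ∃ u v, u < M ∧ v < N1 * N2 ∧ τ = (N1 * N2) * u + v :=
    ⟨τ / (N1 * N2), τ % (N1 * N2), (Nat.div_lt_iff_lt_mul hL0pos).mpr hτ',
      Nat.mod_lt _ hL0pos, (Nat.div_add_mod τ (N1 * N2)).symm⟩
  obtain ⟨s, t, hs, ht, hvst⟩ : ∃ s t, s < N1 ∧ t < N2 ∧ v = N2 * s + t :=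
    ⟨v / N2, v % N2, (Nat.div_lt_iff_lt_mul hN2).mpr hvlt,
      Nat.mod_lt _ hN2, (Nat.div_add_mod v N2).symm⟩
  have hτd : τ = (N1 * N2) * u + (N2 * s + t) := by rw [hτuv, hvst]
  have htrans := transposeCCC M N2 hM hN2 d hCCCd
  set T : ℕ → ℕ → ℕ → ℕ → ℂ := fun n k j l =>
    if (N1 * N2) * n + (N2 * k + j) + τ < M * (N1 * N2) then
      eSeq N1 N2 c d m1 l ((N1 * N2) * n + (N2 * k + j)) *
        (starRingEnd ℂ) (eSeq N1 N2 c d m2 l ((N1 * N2) * n + (N2 * k + j) + τ))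
    else 0 with hT
  have hiff : ∀ p A B : ℕ, B ≤ A → (p < A - B ↔ p + B < A) := by intro p A B h; omega
  have expand : ∀ l, aCorr (eSeq N1 N2 c d m1 l) (eSeq N1 N2 c d m2 l) (M * N1 * N2) τ
      = ∑ n ∈ range M, ∑ k ∈ range N1, ∑ j ∈ range N2, T n k j l := by
    intro l
    rw [aCorr]
    have hMA : M * N1 * N2 - τ = M * (N1 * N2) - τ := by rw [mul_assoc]
    rw [hMA, ← sum_range_ite' (M * (N1 * N2) - τ) (M * (N1 * N2)) (by omega),
      sum_range_mul' M (N1 * N2)]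
    refine Finset.sum_congr rfl fun n hn => ?_
    rw [sum_range_mul' N1 N2]
    refine Finset.sum_congr rfl fun k hk => Finset.sum_congr rfl fun j hj => ?_
    simp only [hT]
    exact if_congr (hiff _ _ _ (le_of_lt hτ')) rfl rfl
  have key : ∀ n ∈ range M, ∀ k ∈ range N1,
      (∑ j ∈ range N2, ∑ l ∈ range M, T n k j l)
        = if u = 0 ∧ t = 0 ∧ k + s < N1
            then (M * N2 : ℂ) * (c m1 n k * (starRingEnd ℂ) (c m2 n (k + s))) else 0 := by
    intro n hn k hk
    rw [mem_range] at hn hk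
    have hsplit : ∑ j ∈ range N2, ∑ l ∈ range M, T n k j l
        = (∑ j ∈ range (N2 - t), ∑ l ∈ range M, T n k j l)
          + ∑ i ∈ range t, ∑ l ∈ range M, T n k ((N2 - t) + i) l := by
      have hr : range N2 = range ((N2 - t) + t) := by congr 1; omega
      rw [hr, Finset.sum_range_add]
    rw [hsplit]
    have hA : (∑ j ∈ range (N2 - t), ∑ l ∈ range M, T n k j l)
        = if u = 0 ∧ t = 0 ∧ k + s < N1
            then (M * N2 : ℂ) * (c m1 n k * (starRingEnd ℂ) (c m2 n (k + s))) else 0 := by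
      by_cases hks : k + s < N1
      · have hterm : ∀ j ∈ range (N2 - t), ∀ l ∈ range M, T n k j l
            = if n + u < M then
                (c m1 n k * d l n j) *
                  (starRingEnd ℂ) (c m2 (n + u) (k + s) * d l (n + u) (j + t))
              else 0 := by
          intro j hj l hl
          rw [mem_range] at hj hl
          have hjN2 : j < N2 := by omega
          have hjt : j + t < N2 := by omega
          have harr : (N1 * N2) * n + (N2 * k + j) + τ
              = (N1 * N2) * (n + u) + (N2 * (k + s) + (j + t)) := by
            rw [hτd]; ring
          simp only [hT]
          rw [harr, eSeq_apply N1 N2 hN2 c d m1 l n k j hk hjN2,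
            eSeq_apply N1 N2 hN2 c d m2 l (n + u) (k + s) (j + t) hks hjt]
          exact if_congr (block_lt (sub_lt_block hks hjt)) rfl rfl
        refine ((Finset.sum_congr rfl fun j hj => Finset.sum_congr rfl (hterm j hj)).trans
          ?_)
        rw [blockA M N2 d htrans n (n + u) t hn ht (c m1 n k) (c m2 (n + u) (k + s))
          (n + u < M) (fun h => h)]
        by_cases hut : u = 0 ∧ t = 0
        · obtain ⟨hu0, ht0⟩ := hut
          subst hu0; subst ht0
          rw [if_pos ⟨by omega, by omega, rfl⟩, if_pos ⟨rfl, rfl, hks⟩, add_zero]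
        · rw [if_neg (fun h => hut ⟨by omega, h.2.2⟩),
            if_neg (fun h => hut ⟨h.1, h.2.1⟩)]
      · obtain ⟨k2, hk2, hk2lt⟩ : ∃ k2, k + s = N1 + k2 ∧ k2 < N1 :=
          ⟨k + s - N1, by omega, by omega⟩
        have hterm : ∀ j ∈ range (N2 - t), ∀ l ∈ range M, T n k j l
            = if n + u + 1 < M then
                (c m1 n k * d l n j) *
                  (starRingEnd ℂ) (c m2 (n + u + 1) k2 * d l (n + u + 1) (j + t))
              else 0 := by
          intro j hj l hl
          rw [mem_range] at hj hl
          have hjN2 : j < N2 := by omega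
          have hjt : j + t < N2 := by omega
          have harr : (N1 * N2) * n + (N2 * k + j) + τ
              = (N1 * N2) * (n + u + 1) + (N2 * k2 + (j + t)) := by
            rw [hτd]
            calc (N1 * N2) * n + (N2 * k + j) + ((N1 * N2) * u + (N2 * s + t))
                = (N1 * N2) * (n + u) + (N2 * k + N2 * s) + (j + t) := by ring
              _ = (N1 * N2) * (n + u) + (N2 * (k + s)) + (j + t) := by
                  rw [← Nat.mul_add]
              _ = (N1 * N2) * (n + u) + (N2 * (N1 + k2)) + (j + t) := by rw [hk2]
              _ = (N1 * N2) * (n + u + 1) + (N2 * k2 + (j + t)) := by ring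
          simp only [hT]
          rw [harr, eSeq_apply N1 N2 hN2 c d m1 l n k j hk hjN2,
            eSeq_apply N1 N2 hN2 c d m2 l (n + u + 1) k2 (j + t) hk2lt hjt]
          exact if_congr (block_lt (sub_lt_block hk2lt hjt)) rfl rfl
        refine ((Finset.sum_congr rfl fun j hj => Finset.sum_congr rfl (hterm j hj)).trans
          ?_)
        rw [blockA M N2 d htrans n (n + u + 1) t hn ht (c m1 n k) (c m2 (n + u + 1) k2)
          (n + u + 1 < M) (fun h => h)]
        rw [if_neg (fun h => by omega : ¬(n + u + 1 < M ∧ n = n + u + 1 ∧ t = 0)),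
          if_neg (fun h => hks h.2.2)]
    have hB : (∑ i ∈ range t, ∑ l ∈ range M, T n k ((N2 - t) + i) l) = 0 := by
      by_cases hks1 : k + s + 1 < N1
      · have hterm : ∀ i ∈ range t, ∀ l ∈ range M, T n k ((N2 - t) + i) l
            = if n + u < M then
                (c m1 n k * d l n ((N2 - t) + i)) *
                  (starRingEnd ℂ) (c m2 (n + u) (k + s + 1) * d l (n + u) i)
              else 0 := by
          intro i hi l hl
          rw [mem_range] at hi hl
          have hiN2 : (N2 - t) + i < N2 := by omega
          have hiN2' : i < N2 := by omega
          have harr : (N1 * N2) * n + (N2 * k + ((N2 - t) + i)) + τ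
              = (N1 * N2) * (n + u) + (N2 * (k + s + 1) + i) := by
            rw [hτd]
            calc (N1 * N2) * n + (N2 * k + ((N2 - t) + i)) + ((N1 * N2) * u + (N2 * s + t))
                = (N1 * N2) * (n + u) + (N2 * k + N2 * s) + ((N2 - t) + t) + i := by ring
              _ = (N1 * N2) * (n + u) + (N2 * k + N2 * s) + N2 + i := by
                  rw [show (N2 - t) + t = N2 by omega]
              _ = (N1 * N2) * (n + u) + (N2 * (k + s + 1) + i) := by ring
          simp only [hT]
          rw [harr, eSeq_apply N1 N2 hN2 c d m1 l n k ((N2 - t) + i) hk hiN2,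
            eSeq_apply N1 N2 hN2 c d m2 l (n + u) (k + s + 1) i hks1 hiN2']
          exact if_congr (block_lt (sub_lt_block hks1 hiN2')) rfl rfl
        refine ((Finset.sum_congr rfl fun i hi => Finset.sum_congr rfl (hterm i hi)).trans
          ?_)
        exact blockB M N2 d htrans n (n + u) t hn ht (c m1 n k) (c m2 (n + u) (k + s + 1))
          (n + u < M) (fun h => h)
      · obtain ⟨k3, hk3, hk3lt⟩ : ∃ k3, k + s + 1 = N1 + k3 ∧ k3 < N1 :=
          ⟨k + s + 1 - N1, by omega, by omega⟩
        have hterm : ∀ i ∈ range t, ∀ l ∈ range M, T n k ((N2 - t) + i) l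
            = if n + u + 1 < M then
                (c m1 n k * d l n ((N2 - t) + i)) *
                  (starRingEnd ℂ) (c m2 (n + u + 1) k3 * d l (n + u + 1) i)
              else 0 := by
          intro i hi l hl
          rw [mem_range] at hi hl
          have hiN2 : (N2 - t) + i < N2 := by omega
          have hiN2' : i < N2 := by omega
          have harr : (N1 * N2) * n + (N2 * k + ((N2 - t) + i)) + τ
              = (N1 * N2) * (n + u + 1) + (N2 * k3 + i) := by
            rw [hτd]
            calc (N1 * N2) * n + (N2 * k + ((N2 - t) + i)) + ((N1 * N2) * u + (N2 * s + t))
                = (N1 * N2) * (n + u) + (N2 * k + N2 * s) + ((N2 - t) + t) + i := by ring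
              _ = (N1 * N2) * (n + u) + (N2 * k + N2 * s) + N2 + i := by
                  rw [show (N2 - t) + t = N2 by omega]
              _ = (N1 * N2) * (n + u) + (N2 * (k + s + 1)) + i := by ring
              _ = (N1 * N2) * (n + u) + (N2 * (N1 + k3)) + i := by rw [← hk3]
              _ = (N1 * N2) * (n + u + 1) + (N2 * k3 + i) := by ring
          simp only [hT]
          rw [harr, eSeq_apply N1 N2 hN2 c d m1 l n k ((N2 - t) + i) hk hiN2,
            eSeq_apply N1 N2 hN2 c d m2 l (n + u + 1) k3 i hk3lt hiN2']
          exact if_congr (block_lt (sub_lt_block hk3lt hiN2')) rfl rfl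
        refine ((Finset.sum_congr rfl fun i hi => Finset.sum_congr rfl (hterm i hi)).trans
          ?_)
        exact blockB M N2 d htrans n (n + u + 1) t hn ht (c m1 n k)
          (c m2 (n + u + 1) k3) (n + u + 1 < M) (fun h => h)
    rw [hA, hB, add_zero]
  calc ∑ l ∈ range M,
        aCorr (eSeq N1 N2 c d m1 l) (eSeq N1 N2 c d m2 l) (M * N1 * N2) τ
      = ∑ l ∈ range M, ∑ n ∈ range M, ∑ k ∈ range N1, ∑ j ∈ range N2, T n k j l :=
        Finset.sum_congr rfl fun l _ => expand l
    _ = ∑ n ∈ range M, ∑ l ∈ range M, ∑ k ∈ range N1, ∑ j ∈ range N2, T n k j l :=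
        Finset.sum_comm
    _ = ∑ n ∈ range M, ∑ k ∈ range N1, ∑ l ∈ range M, ∑ j ∈ range N2, T n k j l :=
        Finset.sum_congr rfl fun n _ => Finset.sum_comm
    _ = ∑ n ∈ range M, ∑ k ∈ range N1, ∑ j ∈ range N2, ∑ l ∈ range M, T n k j l :=
        Finset.sum_congr rfl fun n _ => Finset.sum_congr rfl fun k _ => Finset.sum_comm
    _ = ∑ n ∈ range M, ∑ k ∈ range N1,
          (if u = 0 ∧ t = 0 ∧ k + s < N1
            then (M * N2 : ℂ) * (c m1 n k * (starRingEnd ℂ) (c m2 n (k + s))) else 0) :=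
        Finset.sum_congr rfl fun n hn => Finset.sum_congr rfl fun k hk => key n hn k hk
    _ = 0 := by
        by_cases hut : u = 0 ∧ t = 0
        · obtain ⟨hu0, ht0⟩ := hut
          subst hu0; subst ht0
          have hstep : ∀ n ∈ range M,
              (∑ k ∈ range N1, if 0 = 0 ∧ 0 = 0 ∧ k + s < N1
                then (M * N2 : ℂ) * (c m1 n k * (starRingEnd ℂ) (c m2 n (k + s))) else 0)
                = (M * N2 : ℂ) * aCorr (c m1 n) (c m2 n) N1 s := by
            intro n _
            have h1 : ∀ k ∈ range N1,
                (if 0 = 0 ∧ 0 = 0 ∧ k + s < N1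
                  then (M * N2 : ℂ) * (c m1 n k * (starRingEnd ℂ) (c m2 n (k + s))) else 0)
                = if k < N1 - s
                  then (M * N2 : ℂ) * (c m1 n k * (starRingEnd ℂ) (c m2 n (k + s))) else 0 := by
              intro k _
              exact if_congr (by omega) rfl rfl
            rw [Finset.sum_congr rfl h1, sum_range_ite' (N1 - s) N1 (by omega), aCorr,
              Finset.mul_sum]
          rw [Finset.sum_congr rfl hstep, ← Finset.mul_sum,
            hCCCc m1 hm1 m2 hm2 s hs, if_neg (fun h => hne h.1), mul_zero]
        · refine Finset.sum_eq_zero fun n _ => Finset.sum_eq_zero fun k _ => ?_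
          exact if_neg (fun h => hut ⟨h.1, h.2.1⟩)
end
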